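/- Pre-Lie algebra structures ∘ on a k-module g are in bijection with k[t]-linear twisted Lie algebra structures on Σg[t] (the free k[t]-module on g placed in symmetric-sequence degree 1, with t of degree 1), via {x, y} = (x ∘ y)t − t(y ∘ x) for x, y ∈ g; that is, the bracket defined by {t^a x t^b, t^c y t^d} := t^a (x ∘ y) t^{b+c+d} − t^{a+b+c} (y ∘ x) t^d satisfies the twisted antisymmetry and twisted Jacobi identities if and only if ∘ satisfies the right pre-Lie identity. -/
import Mathlib


noncomputable section

variable (k : Type*) (g : Type*) [CommRing k] [AddCommGroup g] [Module k g]

/- We model the S-module `Σg[t]` concretely: its degree-`m` component is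
`Fin m → g` (the direct sum of copies of `g` indexed by the possible positions of
the degree-1 generator `x` among the `m` slots, the remaining slots being filled
by `t`); the element `tᵃ x tᵇ` (`a + b + 1 = m`) corresponds to the function
supported at slot `a` with value `x`, and `S_m` permutes the slots. -/

/-- The block-swap permutation `(12)^{p,q} ∈ S_{p+q}` sending the first block
(of size `p`) up by `q` and the second block (of size `q`) down by `p`. -/
def blkSwap (p q : ℕ) : Fin (p + q) ≃ Fin (q + p) :=
  finSumFinEquiv.symm.trans ((Equiv.sumComm (Fin p) (Fin q)).trans finSumFinEquiv)

/-- Regrouping of a three-block decomposition. -/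
def tri3 (a b c : ℕ) : (Fin a ⊕ (Fin b ⊕ Fin c)) ≃ Fin (a + (b + c)) :=
  (Equiv.sumCongr (Equiv.refl (Fin a)) finSumFinEquiv).trans finSumFinEquiv

/-- The block permutation `(123)^{n,p,m}` (block 1 → position 2, block 2 →
position 3, block 3 → position 1). -/
def blk123 (n p m : ℕ) : Fin (n + (p + m)) ≃ Fin (m + (n + p)) :=
  (tri3 n p m).symm.trans
    ((((Equiv.sumAssoc (Fin n) (Fin p) (Fin m)).symm).trans
      (Equiv.sumComm (Fin n ⊕ Fin p) (Fin m))).trans (tri3 m n p))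

/-- The block permutation `(132)^{p,m,n}` (block 1 → position 3, block 2 →
position 1, block 3 → position 2). -/
def blk132 (p m n : ℕ) : Fin (p + (m + n)) ≃ Fin (m + (n + p)) :=
  (tri3 p m n).symm.trans
    (((Equiv.sumComm (Fin p) (Fin m ⊕ Fin n)).trans
      (Equiv.sumAssoc (Fin m) (Fin n) (Fin p))).trans (tri3 m n p))

/-- The `k[t]`-linear bracket on `Σg[t]` determined by
`{x, y} = (x ∘ y)t − t(y ∘ x)` for `x, y ∈ g`, i.e. (in degree-correct form)
`{tᵃ x tᵇ, tᶜ y tᵈ} = tᵃ (x∘y) t^{b+c+d+1} − t^{a+b+c+1} (y∘x) tᵈ`: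
the first block of slots receives the elements `x∘y` (at the slot of `x`) and
the second block receives `−(y∘x)` (at slot `(a+b+1) + c`). -/
def twBr (circ : g →ₗ[k] g →ₗ[k] g) {m n : ℕ}
    (f : Fin m → g) (h : Fin n → g) : Fin (m + n) → g :=
  Fin.addCases (fun i => ∑ j, circ (f i) (h j)) (fun j => -∑ i, circ (h j) (f i))

section helpers
variable (circ : g →ₗ[k] g →ₗ[k] g) {m n p : ℕ}

lemma twBr_castAdd (f : Fin m → g) (h : Fin n → g) (i : Fin m) :
    twBr k g circ f h (Fin.castAdd n i) = ∑ j, circ (f i) (h j) := by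
  simp [twBr]

lemma twBr_natAdd (f : Fin m → g) (h : Fin n → g) (j : Fin n) :
    twBr k g circ f h (Fin.natAdd m j) = -∑ i, circ (h j) (f i) := by
  simp [twBr]

lemma tri3_inl (a b c : ℕ) (i : Fin a) :
    tri3 a b c (Sum.inl i) = Fin.castAdd (b + c) i := by simp [tri3]

lemma tri3_inr_inl (a b c : ℕ) (i : Fin b) :
    tri3 a b c (Sum.inr (Sum.inl i)) = Fin.natAdd a (Fin.castAdd c i) := by
  simp [tri3, Fin.natAdd, Fin.castAdd, Fin.ext_iff]

lemma tri3_inr_inr (a b c : ℕ) (i : Fin c) :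
    tri3 a b c (Sum.inr (Sum.inr i)) = Fin.natAdd a (Fin.natAdd b i) := by
  simp [tri3, Fin.natAdd, Fin.ext_iff]

lemma blkSwap_symm_castAdd (i : Fin m) :
    (blkSwap n m).symm (Fin.castAdd n i) = Fin.natAdd n i := by
  rw [Equiv.symm_apply_eq]; simp [blkSwap]

lemma blkSwap_symm_natAdd (j : Fin n) :
    (blkSwap n m).symm (Fin.natAdd m j) = Fin.castAdd m j := by
  rw [Equiv.symm_apply_eq]; simp [blkSwap]

lemma blk123_symm_castAdd (i : Fin m) :
    (blk123 n p m).symm (Fin.castAdd (n + p) i) = Fin.natAdd n (Fin.natAdd p i) := by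
  rw [Equiv.symm_apply_eq, ← tri3_inr_inr n p m i]
  simp [blk123, tri3_inl]

lemma blk123_symm_natAdd_castAdd (j : Fin n) :
    (blk123 n p m).symm (Fin.natAdd m (Fin.castAdd p j)) = Fin.castAdd (p + m) j := by
  rw [Equiv.symm_apply_eq, ← tri3_inl n p m j]
  simp [blk123, tri3_inr_inl]

lemma blk123_symm_natAdd_natAdd (q : Fin p) :
    (blk123 n p m).symm (Fin.natAdd m (Fin.natAdd n q)) = Fin.natAdd n (Fin.castAdd m q) := by
  rw [Equiv.symm_apply_eq, ← tri3_inr_inl n p m q]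
  simp [blk123, tri3_inr_inr]

lemma blk132_symm_castAdd (i : Fin m) :
    (blk132 p m n).symm (Fin.castAdd (n + p) i) = Fin.natAdd p (Fin.castAdd n i) := by
  rw [Equiv.symm_apply_eq, ← tri3_inr_inl p m n i]
  simp [blk132, tri3_inl]

lemma blk132_symm_natAdd_castAdd (j : Fin n) :
    (blk132 p m n).symm (Fin.natAdd m (Fin.castAdd p j)) = Fin.natAdd p (Fin.natAdd m j) := by
  rw [Equiv.symm_apply_eq, ← tri3_inr_inr p m n j]
  simp [blk132, tri3_inr_inl]

lemma blk132_symm_natAdd_natAdd (q : Fin p) :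
    (blk132 p m n).symm (Fin.natAdd m (Fin.natAdd n q)) = Fin.castAdd (m + n) q := by
  rw [Equiv.symm_apply_eq, ← tri3_inl p m n q]
  simp [blk132, tri3_inr_inr]

end helpers


section aux
variable {k g} (circ : g →ₗ[k] g →ₗ[k] g)

lemma quad_aux {a b : ℕ} (A B C D : Fin a → Fin b → g)
    (hk : ∀ i j, A i j - B i j + (C i j - D i j) = 0) :
    ((∑ i, ∑ j, A i j) - ∑ j, ∑ i, B i j) + ((∑ i, ∑ j, C i j) - ∑ j, ∑ i, D i j) = 0 := by
  have hB : (∑ j, ∑ i, B i j) = ∑ i, ∑ j, B i j := Finset.sum_comm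
  have hD : (∑ j, ∑ i, D i j) = ∑ i, ∑ j, D i j := Finset.sum_comm
  rw [hB, hD, ← Finset.sum_sub_distrib, ← Finset.sum_sub_distrib, ← Finset.sum_add_distrib]
  refine Finset.sum_eq_zero fun i _ => ?_
  rw [← Finset.sum_sub_distrib, ← Finset.sum_sub_distrib, ← Finset.sum_add_distrib]
  exact Finset.sum_eq_zero fun j _ => hk i j

lemma key_aux
    (hp : ∀ x y z : g,
      circ x (circ y z) - circ (circ x y) z = circ x (circ z y) - circ (circ x z) y)
    (x y z : g) :
    circ x (circ y z) - circ (circ x y) z - (circ x (circ z y) - circ (circ x z) y) = 0 := by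
  rw [hp]; exact sub_self _

end aux

/-- Pre-Lie algebra structures `∘` on a `k`-module `g` correspond
exactly to `k[t]`-linear twisted Lie algebra structures on `Σg[t]` via
`{x, y} = (x ∘ y)t − t(y ∘ x)`: the bracket `twBr` defined by this formula
satisfies the twisted antisymmetry `{f,h} = −(12)^{|h|,|f|}{h,f}` and the twisted
Jacobi identity
`{f,{h,l}} + (123)^{|h|,|l|,|f|}{h,{l,f}} + (132)^{|l|,|f|,|h|}{l,{f,h}} = 0`
(in all degrees) if and only if `∘` satisfies the right pre-Lie identity. -/
theorem preLie_iff_twisted_lie (circ : g →ₗ[k] g →ₗ[k] g) :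
    ((∀ (m n : ℕ) (f : Fin m → g) (h : Fin n → g),
        twBr k g circ f h = -(twBr k g circ h f ∘ (blkSwap n m).symm)) ∧
      (∀ (m n p : ℕ) (f : Fin m → g) (h : Fin n → g) (l : Fin p → g),
        twBr k g circ f (twBr k g circ h l) +
            (twBr k g circ h (twBr k g circ l f) ∘ (blk123 n p m).symm) +
            (twBr k g circ l (twBr k g circ f h) ∘ (blk132 p m n).symm) = 0)) ↔
    (∀ x y z : g,
      circ x (circ y z) - circ (circ x y) z = circ x (circ z y) - circ (circ x z) y) := by
  constructor
  · rintro ⟨-, hJ⟩ x y z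
    have H := congrFun (hJ 1 1 1 (fun _ => x) (fun _ => y) (fun _ => z))
      (Fin.castAdd (1 + 1) (0 : Fin 1))
    simp only [Pi.add_apply, Function.comp_apply, Pi.zero_apply,
      blk123_symm_castAdd, blk132_symm_castAdd,
      twBr_castAdd, twBr_natAdd, Fin.sum_univ_add, map_sum, map_neg,
      LinearMap.neg_apply, LinearMap.sum_apply, Finset.sum_neg_distrib, neg_neg,
      Fin.sum_univ_one, Finset.univ_unique, Finset.sum_singleton] at H
    rw [← sub_eq_zero]
    exact Eq.trans (by abel) H
  · intro hp
    constructor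
    · intro m n f h
      funext x
      induction x using Fin.addCases with
      | left i =>
        simp [twBr_castAdd, twBr_natAdd, blkSwap_symm_castAdd]
      | right j =>
        simp [twBr_castAdd, twBr_natAdd, blkSwap_symm_natAdd]
    · intro m n p f h l
      funext x
      induction x using Fin.addCases with
      | left i =>
        simp only [Pi.add_apply, Function.comp_apply, Pi.zero_apply,
          blk123_symm_castAdd, blk132_symm_castAdd,
          twBr_castAdd, twBr_natAdd, Fin.sum_univ_add, map_sum, map_neg,
          LinearMap.neg_apply, LinearMap.sum_apply, Finset.sum_neg_distrib, neg_neg]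
        exact Eq.trans (by abel)
          (quad_aux
            (fun j q => circ (f i) (circ (h j) (l q)))
            (fun j q => circ (f i) (circ (l q) (h j)))
            (fun j q => circ (circ (f i) (l q)) (h j))
            (fun j q => circ (circ (f i) (h j)) (l q))
            (fun j q => Eq.trans (by abel) (key_aux circ hp (f i) (h j) (l q))))
      | right r =>
        induction r using Fin.addCases with
        | left j =>
          simp only [Pi.add_apply, Function.comp_apply, Pi.zero_apply,
            blk123_symm_natAdd_castAdd, blk132_symm_natAdd_castAdd,
            twBr_castAdd, twBr_natAdd, Fin.sum_univ_add, map_sum, map_neg,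
            LinearMap.neg_apply, LinearMap.sum_apply, Finset.sum_neg_distrib, neg_neg]
          exact Eq.trans (by abel)
            (quad_aux
              (fun q i => circ (h j) (circ (l q) (f i)))
              (fun q i => circ (circ (h j) (l q)) (f i))
              (fun q i => circ (circ (h j) (f i)) (l q))
              (fun q i => circ (h j) (circ (f i) (l q)))
              (fun q i => Eq.trans (by abel) (key_aux circ hp (h j) (l q) (f i))))
        | right q =>
          simp only [Pi.add_apply, Function.comp_apply, Pi.zero_apply,
            blk123_symm_natAdd_natAdd, blk132_symm_natAdd_natAdd,
            twBr_castAdd, twBr_natAdd, Fin.sum_univ_add, map_sum, map_neg,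
            LinearMap.neg_apply, LinearMap.sum_apply, Finset.sum_neg_distrib, neg_neg]
          exact Eq.trans (by abel)
            (quad_aux
              (fun i j => circ (circ (l q) (h j)) (f i))
              (fun i j => circ (circ (l q) (f i)) (h j))
              (fun i j => circ (l q) (circ (f i) (h j)))
              (fun i j => circ (l q) (circ (h j) (f i)))
              (fun i j => Eq.trans (by abel) (key_aux circ hp (l q) (f i) (h j))))
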